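/- arXiv:2403.08514 — 2 statements merged into one kernel-verified Lean document; each statement's English description precedes it below -/
import Mathlib

section
/- Derivative of a spline function: let k ≥ 2, let r ≤ n be integers, let α : ℤ → ℝ satisfy α_j = 0 whenever j < r or j > n, and let f(x) = Σ_{j=r}^{n} α_j B_{j,k}(x). Then for every x ∈ ℝ that is not a knot (x ≠ t_i for all i ∈ ℤ), f is differentiable at x with derivative D f(x) = Σ_{j=r}^{n+1} (k − 1) · ((α_j − α_{j−1})/(t_{j+k−1} − t_j)) · B_{j,k−1}(x). -/
/-- B-splines of order `k ≥ 1` with knot sequence `t`, defined by the Cox–de Boor recursion: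
`B_{j,1}(x) = 1` if `t j ≤ x < t (j+1)` and `0` otherwise; and for `k ≥ 2`,
`B_{j,k}(x) = ((x − t_j)/(t_{j+k−1} − t_j)) B_{j,k−1}(x)
            + ((t_{j+k} − x)/(t_{j+k} − t_{j+1})) B_{j+1,k−1}(x)`.
(The value for order `0` is irrelevant and set to `0`.) -/
noncomputable def bspline (t : ℤ → ℝ) : ℕ → ℤ → ℝ → ℝ
  | 0, _, _ => 0
  | 1, j, x => if t j ≤ x ∧ x < t (j + 1) then 1 else 0
  | (k + 2), j, x =>
      ((x - t j) / (t (j + (k : ℤ) + 1) - t j)) * bspline t (k + 1) j x +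
      ((t (j + (k : ℤ) + 2) - x) / (t (j + (k : ℤ) + 2) - t (j + 1))) *
        bspline t (k + 1) (j + 1) x

/-!
Away from the knots the order-one B-splines are locally constant, and differentiating the
Cox–de Boor recursion gives, by induction on the order, de Boor's formula
`B'_{j,k+1} = k (B_{j,k}/(t_{j+k} - t_j) - B_{j+1,k}/(t_{j+k+1} - t_{j+1}))`.
Writing the recursion as `B_{j,k+1} = ω_{j,k} B_{j,k} + (1 - ω_{j+1,k}) B_{j+1,k}` with
`ω_{j,k}(x) = (x - t_j)/(t_{j+k} - t_j)`, the inductive step is a rational identity between these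
weights and the divided differences of the lower order. Summing against `α` and summing by parts,
which produces no boundary terms since `α` vanishes outside `[r, n]`, gives the theorem.
-/

open Set in
theorem hasDerivAt_indicator_const_of_notMem_frontier {𝕜 F : Type*} [NontriviallyNormedField 𝕜]
    [NormedAddCommGroup F] [NormedSpace 𝕜 F] {s : Set 𝕜} {x : 𝕜} (c : F)
    (hx : x ∉ frontier s) : HasDerivAt (s.indicator fun _ => c) 0 x := by
  rw [← mem_compl_iff, compl_frontier_eq_union_interior] at hx
  rcases hx with hs | hs
  · exact (hasDerivAt_const x c).congr_of_eventuallyEq <|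
      Filter.mem_of_superset (mem_interior_iff_mem_nhds.mp hs) fun y hy => indicator_of_mem hy _
  · exact (hasDerivAt_const x 0).congr_of_eventuallyEq <|
      Filter.mem_of_superset (mem_interior_iff_mem_nhds.mp hs) fun y hy => indicator_of_notMem hy _

theorem bspline_one (t : ℤ → ℝ) (j : ℤ) :
    bspline t 1 j = (Set.Ico (t j) (t (j + 1))).indicator fun _ => 1 := by
  ext x
  simp [bspline, Set.indicator_apply]

theorem hasDerivAt_bspline_one {t : ℤ → ℝ} (ht : StrictMono t) {x : ℝ} (hx : ∀ i, x ≠ t i)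
    (j : ℤ) : HasDerivAt (bspline t 1 j) 0 x := by
  rw [bspline_one]
  refine hasDerivAt_indicator_const_of_notMem_frontier 1 ?_
  rw [frontier_Ico (ht (lt_add_one j))]
  simp [hx]

noncomputable def bsplineWeight (t : ℤ → ℝ) (k : ℕ) (j : ℤ) (x : ℝ) : ℝ :=
  (x - t j) / (t (j + k) - t j)

theorem hasDerivAt_bsplineWeight (t : ℤ → ℝ) (k : ℕ) (j : ℤ) (x : ℝ) :
    HasDerivAt (bsplineWeight t k j) (t (j + k) - t j)⁻¹ x := by
  have := ((hasDerivAt_id x).sub_const (t j)).div_const (t (j + k) - t j)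
  rwa [one_div] at this

theorem bspline_add_two {t : ℤ → ℝ} (ht : Function.Injective t) (k : ℕ) (j : ℤ) :
    bspline t (k + 2) j = fun x => bsplineWeight t (k + 1) j x * bspline t (k + 1) j x +
      (1 - bsplineWeight t (k + 1) (j + 1) x) * bspline t (k + 1) (j + 1) x := by
  ext x
  have hne : t (j + 1 + (k + 1 : ℕ)) - t (j + 1) ≠ 0 := sub_ne_zero.mpr (ht.ne (by omega))
  rw [bsplineWeight, bsplineWeight, one_sub_div hne, bspline]
  push_cast
  ring_nf

noncomputable def bsplineSlope (t : ℤ → ℝ) (k : ℕ) (j : ℤ) (x : ℝ) : ℝ :=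
  bspline t k j x / (t (j + k) - t j)

theorem bsplineWeight_mul_add_one_sub_mul {t : ℤ → ℝ} (ht : Function.Injective t) (k : ℕ) (j : ℤ)
    (x : ℝ) :
    bsplineWeight t (k + 2) j x * (bsplineSlope t (k + 1) j x - bsplineSlope t (k + 1) (j + 1) x) +
      (1 - bsplineWeight t (k + 2) (j + 1) x) *
        (bsplineSlope t (k + 1) (j + 1) x - bsplineSlope t (k + 1) (j + 2) x) =
      bsplineSlope t (k + 2) j x - bsplineSlope t (k + 2) (j + 1) x := by
  have hne : ∀ a b : ℤ, a ≠ b → t b - t a ≠ 0 := fun a b h => sub_ne_zero.mpr (ht.ne h).symm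
  simp only [bsplineSlope, bsplineWeight, bspline_add_two ht]
  have h1 := hne j (j + k + 1) (by omega)
  have h2 := hne (j + 1) (j + k + 2) (by omega)
  have h3 := hne (j + 2) (j + k + 3) (by omega)
  have h4 := hne j (j + k + 2) (by omega)
  have h5 := hne (j + 1) (j + k + 3) (by omega)
  push_cast
  ring_nf at h1 h2 h3 h4 h5 ⊢
  field_simp
  ring

theorem hasDerivAt_bspline_succ {t : ℤ → ℝ} (ht : StrictMono t) {x : ℝ} (hx : ∀ i, x ≠ t i)
    (k : ℕ) (j : ℤ) :
    HasDerivAt (bspline t (k + 1) j)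
      (k * (bsplineSlope t k j x - bsplineSlope t k (j + 1) x)) x := by
  induction k generalizing j with
  | zero => simpa using hasDerivAt_bspline_one ht hx j
  | succ k ih =>
    rw [bspline_add_two ht.injective]
    refine (((hasDerivAt_bsplineWeight t (k + 1) j x).fun_mul (ih j)).add
      (((hasDerivAt_bsplineWeight t (k + 1) (j + 1) x).const_sub 1).fun_mul
        (ih (j + 1)))).congr_deriv ?_
    rcases k with _ | k
    · simp only [zero_add, Nat.cast_one, CharP.cast_eq_zero, bsplineSlope, add_zero, sub_self,
        div_zero, mul_zero, neg_mul, one_mul]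
      ring
    · have key := bsplineWeight_mul_add_one_sub_mul ht.injective k j x
      simp only [bsplineSlope] at key ⊢
      push_cast at key ⊢
      ring_nf at key ⊢
      linear_combination ((k : ℝ) + 1) * key

open Finset in
theorem sum_Icc_by_parts {R : Type*} [CommRing R] {a : ℤ → R} (c : ℤ → R) {r n : ℤ}
    (ha : ∀ j, j < r ∨ n < j → a j = 0) :
    ∑ j ∈ Icc r n, a j * (c j - c (j + 1)) = ∑ j ∈ Icc r (n + 1), (a j - a (j - 1)) * c j := by
  have h_top : ∑ j ∈ Icc r (n + 1), a j * c j = ∑ j ∈ Icc r n, a j * c j := by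
    refine (sum_subset (Icc_subset_Icc_right (by omega)) fun j hj hjn => ?_).symm
    rw [ha j (by simp only [mem_Icc] at hj hjn; omega), zero_mul]
  have h_shift : ∑ j ∈ Icc r (n + 1), a (j - 1) * c j = ∑ j ∈ Icc r n, a j * c (j + 1) :=
    calc ∑ j ∈ Icc r (n + 1), a (j - 1) * c j
        = ∑ j ∈ (Icc (r - 1) n).map (addRightEmbedding 1), a (j - 1) * c j := by
          rw [map_add_right_Icc, sub_add_cancel]
      _ = ∑ j ∈ Icc (r - 1) n, a j * c (j + 1) := by
          rw [sum_map]
          simp only [addRightEmbedding_apply, add_sub_cancel_right]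
      _ = ∑ j ∈ Icc r n, a j * c (j + 1) := by
          refine (sum_subset (Icc_subset_Icc_left (by omega)) fun j hj hjr => ?_).symm
          rw [ha j (by simp only [mem_Icc] at hj hjr; omega), zero_mul]
  simp only [mul_sub, sub_mul, sum_sub_distrib, h_top, h_shift]

theorem splineFunction_hasDerivAt_general (t : ℤ → ℝ) (ht : StrictMono t) (k : ℕ) (hk : 2 ≤ k)
    (r n : ℤ) (α : ℤ → ℝ) (hα : ∀ j : ℤ, (j < r ∨ n < j) → α j = 0)
    (x : ℝ) (hx : ∀ i : ℤ, x ≠ t i) :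
    HasDerivAt (fun y => ∑ j ∈ Finset.Icc r n, α j * bspline t k j y)
      (∑ j ∈ Finset.Icc r (n + 1),
        ((k : ℝ) - 1) * ((α j - α (j - 1)) / (t (j + (k : ℤ) - 1) - t j)) *
          bspline t (k - 1) j x) x := by
  obtain ⟨k, rfl⟩ : ∃ m, k = m + 1 := ⟨k - 1, by omega⟩
  have hf : HasDerivAt (fun y => ∑ j ∈ Finset.Icc r n, α j * bspline t (k + 1) j y)
      (∑ j ∈ Finset.Icc r n, α j * (k * bsplineSlope t k j x - k * bsplineSlope t k (j + 1) x)) x :=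
    HasDerivAt.fun_sum fun j _ => by
      simpa only [mul_sub] using (hasDerivAt_bspline_succ ht hx k j).const_mul (α j)
  rw [sum_Icc_by_parts (fun j => (k : ℝ) * bsplineSlope t k j x) hα] at hf
  refine hf.congr_deriv (Finset.sum_congr rfl fun j _ => ?_)
  simp only [bsplineSlope, Nat.cast_add, Nat.cast_one, add_tsub_cancel_right, ← add_assoc]
  ring

/-- Derivative of a spline function: if `α j = 0` for `j < r` or `j > n` and
`f(x) = Σ_{j=r}^{n} α j B_{j,k}(x)` with `k ≥ 2`, then at every non-knot point `x`,
`f` is differentiable with derivative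
`Σ_{j=r}^{n+1} (k − 1) ((α j − α (j−1))/(t_{j+k−1} − t_j)) B_{j,k−1}(x)`. -/
theorem splineFunction_hasDerivAt (t : ℤ → ℝ) (ht : StrictMono t) (k : ℕ) (hk : 2 ≤ k)
    (r n : ℤ) (hrn : r ≤ n) (α : ℤ → ℝ) (hα : ∀ j : ℤ, (j < r ∨ n < j) → α j = 0)
    (x : ℝ) (hx : ∀ i : ℤ, x ≠ t i) :
    HasDerivAt (fun y => ∑ j ∈ Finset.Icc r n, α j * bspline t k j y)
      (∑ j ∈ Finset.Icc r (n + 1),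
        ((k : ℝ) - 1) * ((α j - α (j - 1)) / (t (j + (k : ℤ) - 1) - t j)) *
          bspline t (k - 1) j x) x :=
  splineFunction_hasDerivAt_general t ht k hk r n α hα x hx
end

section
/- Integral of a spline function: let k ≥ 1, let r ≤ n be integers, let α : ℤ → ℝ satisfy α_j = 0 whenever j < r or j > n, and let f(u) = Σ_{i=r}^{n} α_i B_{i,k}(u). For every x ∈ ℝ with t_r ≤ x, and s ∈ ℤ such that t_{s−1} < x ≤ t_s, one has ∫_{t_r}^{x} f(u) du = Σ_{i=r}^{s−1} ( Σ_{j=r}^{i} α_j (t_{j+k} − t_j)/k ) · B_{i,k+1}(x), where the sums are over the indicated integer ranges (empty sums being zero). -/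
open Finset Topology

variable {t : ℤ → ℝ}

theorem sum_Icc_sub_one_sub' {M : Type*} [AddCommGroup M] (f : ℤ → M) {m n : ℤ}
    (hmn : m ≤ n) : ∑ i ∈ Icc m (n - 1), (f i - f (i + 1)) = f m - f n := by
  induction n, hmn using Int.leInduction with
  | base => simp
  | succ n hmn ih =>
    rw [add_sub_cancel_right, ← Finset.insert_Icc_sub_one_right_eq_Icc hmn, sum_insert (by simp),
      ih]
    abel

theorem sum_Icc_sum_Icc_comm {M : Type*} [AddCommMonoid M] (f : ℤ → ℤ → M) (r n m : ℤ) :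
    ∑ j ∈ Icc r n, ∑ i ∈ Icc j m, f j i = ∑ i ∈ Icc r m, ∑ j ∈ Icc r (min i n), f j i :=
  sum_comm' fun j i ↦ by simp only [mem_Icc, le_min_iff]; omega

theorem bspline_succ_succ (t : ℤ → ℝ) (k : ℕ) (j : ℤ) (x : ℝ) :
    bspline t (k + 2) j x =
      ((x - t j) / (t (j + k + 1) - t j)) * bspline t (k + 1) j x +
      ((t (j + k + 2) - x) / (t (j + k + 2) - t (j + 1))) * bspline t (k + 1) (j + 1) x :=
  rfl

theorem bspline_one_s9 (t : ℤ → ℝ) (j : ℤ) (x : ℝ) :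
    bspline t 1 j x = if t j ≤ x ∧ x < t (j + 1) then 1 else 0 :=
  rfl

theorem bspline_eq_zero_of_lt (ht : Monotone t) {j : ℤ} {x : ℝ} (hx : x < t j) :
    ∀ k, bspline t k j x = 0
  | 0 => rfl
  | 1 => if_neg fun h => hx.not_ge h.1
  | k + 2 => by
    rw [bspline_succ_succ, bspline_eq_zero_of_lt ht hx,
      bspline_eq_zero_of_lt ht (hx.trans_le (ht (by omega)))]
    ring

theorem bspline_eq_zero_of_le (ht : StrictMono t) {j : ℤ} {x : ℝ} (hx : x ≤ t j) (k : ℕ) :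
    bspline t (k + 2) j x = 0 := by
  rcases hx.lt_or_eq with hx | rfl
  · exact bspline_eq_zero_of_lt ht.monotone hx _
  · rw [bspline_succ_succ, bspline_eq_zero_of_lt ht.monotone (ht (lt_add_one j))]
    ring

theorem bspline_two (ht : StrictMono t) (j : ℤ) (x : ℝ) :
    bspline t 2 j x =
      max 0 (min ((x - t j) / (t (j + 1) - t j)) ((t (j + 2) - x) / (t (j + 2) - t (j + 1)))) := by
  have d₁ : 0 < t (j + 1) - t j := sub_pos.2 (ht (by omega))
  have d₂ : 0 < t (j + 2) - t (j + 1) := sub_pos.2 (ht (by omega))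
  rw [bspline_succ_succ, bspline_one_s9, bspline_one_s9, show j + 1 + 1 = j + 2 by ring]
  push_cast
  rw [show j + 0 + 1 = j + 1 by ring, show j + 0 + 2 = j + 2 by ring]
  rcases lt_or_ge x (t j) with h₀ | h₀
  · have : (x - t j) / (t (j + 1) - t j) ≤ 0 := div_nonpos_of_nonpos_of_nonneg (by linarith) d₁.le
    simp [h₀.not_ge, (h₀.trans (ht (lt_add_one j))).not_ge, (min_le_left _ _).trans this]
  rcases lt_or_ge x (t (j + 1)) with h₁ | h₁
  · have ha : (x - t j) / (t (j + 1) - t j) ≤ 1 := (div_le_one d₁).2 (by linarith)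
    have hb : 1 ≤ (t (j + 2) - x) / (t (j + 2) - t (j + 1)) := (one_le_div d₂).2 (by linarith)
    simp [h₀, h₁, h₁.not_ge, min_eq_left (ha.trans hb), div_nonneg (sub_nonneg.2 h₀) d₁.le]
  rcases lt_or_ge x (t (j + 2)) with h₂ | h₂
  · have ha : 1 ≤ (x - t j) / (t (j + 1) - t j) := (one_le_div d₁).2 (by linarith)
    have hb : (t (j + 2) - x) / (t (j + 2) - t (j + 1)) ≤ 1 := (div_le_one d₂).2 (by linarith)
    simp [h₁, h₂, h₁.not_gt, min_eq_right (hb.trans ha), div_nonneg (sub_nonneg.2 h₂.le) d₂.le]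
  · have : (t (j + 2) - x) / (t (j + 2) - t (j + 1)) ≤ 0 :=
      div_nonpos_of_nonpos_of_nonneg (by linarith) d₂.le
    simp [h₁.not_gt, h₂.not_gt, (min_le_right _ _).trans this]

theorem continuous_bspline (ht : StrictMono t) (k : ℕ) (j : ℤ) :
    Continuous (bspline t (k + 2) j) := by
  induction k generalizing j with
  | zero =>
    rw [show bspline t 2 j = _ from funext (bspline_two ht j)]
    fun_prop
  | succ k ih =>
    have := ih j
    have := ih (j + 1)
    simp only [funext (bspline_succ_succ t (k + 1) j)]
    fun_prop

theorem intervalIntegrable_bspline (ht : StrictMono t) (k : ℕ) (j : ℤ) (a b : ℝ) :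
    IntervalIntegrable (bspline t k j) MeasureTheory.volume a b :=
  match k with
  | 0 => intervalIntegrable_const (c := 0)
  | 1 => by
    rw [show bspline t 1 j = (Set.Ico (t j) (t (j + 1))).indicator 1 by
      ext x; simp [bspline_one_s9, Set.indicator_apply], intervalIntegrable_iff]
    exact (MeasureTheory.integrableOn_const measure_Ioc_lt_top.ne).indicator measurableSet_Ico
  | k + 2 => (continuous_bspline ht k j).intervalIntegrable a b

theorem bspline_one_eventuallyEq (t : ℤ → ℝ) (j : ℤ) (x : ℝ) :
    bspline t 1 j =ᶠ[𝓝[≥] x] fun _ ↦ bspline t 1 j x := by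
  rcases lt_or_ge x (t j) with h₀ | h₀
  · filter_upwards [nhdsWithin_le_nhds (Iio_mem_nhds h₀)] with y (hy : y < t j)
    simp [bspline_one_s9, hy.not_ge, h₀.not_ge]
  rcases lt_or_ge x (t (j + 1)) with h₁ | h₁
  · filter_upwards [Ico_mem_nhdsGE h₁] with y hy
    simp [bspline_one_s9, h₀, h₁, hy.2, h₀.trans hy.1]
  · filter_upwards [self_mem_nhdsWithin] with y (hy : x ≤ y)
    simp [bspline_one_s9, (h₁.trans hy).not_gt, h₁.not_gt]

theorem bspline_div_sub_bspline_div (ht : StrictMono t) (k : ℕ) (j : ℤ) (x : ℝ) :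
    bspline t (k + 2) j x / (t (j + k + 2) - t j) -
        bspline t (k + 2) (j + 1) x / (t (j + k + 3) - t (j + 1)) =
      (x - t j) / (t (j + k + 2) - t j) *
          (bspline t (k + 1) j x / (t (j + k + 1) - t j) -
            bspline t (k + 1) (j + 1) x / (t (j + k + 2) - t (j + 1))) +
        (t (j + k + 3) - x) / (t (j + k + 3) - t (j + 1)) *
          (bspline t (k + 1) (j + 1) x / (t (j + k + 2) - t (j + 1)) -
            bspline t (k + 1) (j + 2) x / (t (j + k + 3) - t (j + 2))) := by
  have hd : ∀ {p q : ℤ}, p < q → t q - t p ≠ 0 := fun h ↦ (sub_pos.2 (ht h)).ne'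
  have := hd (show j < j + k + 1 by omega)
  have := hd (show j < j + k + 2 by omega)
  have := hd (show j + 1 < j + k + 2 by omega)
  have := hd (show j + 1 < j + k + 3 by omega)
  have := hd (show j + 2 < j + k + 3 by omega)
  rw [bspline_succ_succ, bspline_succ_succ, show j + 1 + k + 1 = j + k + 2 by ring,
    show j + 1 + k + 2 = j + k + 3 by ring, show j + 1 + 1 = j + 2 by ring]
  field_simp
  ring

theorem hasDerivWithinAt_bspline (ht : StrictMono t) (k : ℕ) (j : ℤ) (x : ℝ) :
    HasDerivWithinAt (bspline t (k + 1) j)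
      (k * (bspline t k j x / (t (j + k) - t j) -
        bspline t k (j + 1) x / (t (j + 1 + k) - t (j + 1)))) (Set.Ici x) x := by
  induction k generalizing j with
  | zero =>
    simpa using (hasDerivWithinAt_const x _ _).congr_of_eventuallyEq
      (bspline_one_eventuallyEq t j x) rfl
  | succ k ih =>
    have hω₁ : HasDerivWithinAt (fun y ↦ (y - t j) / (t (j + k + 1) - t j))
        (1 / (t (j + k + 1) - t j)) (Set.Ici x) x := by
      simpa using ((hasDerivWithinAt_id x _).sub_const (t j)).div_const (t (j + k + 1) - t j)
    have hω₂ : HasDerivWithinAt (fun y ↦ (t (j + k + 2) - y) / (t (j + k + 2) - t (j + 1)))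
        (-1 / (t (j + k + 2) - t (j + 1))) (Set.Ici x) x := by
      simpa using ((hasDerivWithinAt_id x _).const_sub (t (j + k + 2))).div_const
        (t (j + k + 2) - t (j + 1))
    have h : HasDerivWithinAt (bspline t (k + 2) j) _ (Set.Ici x) x :=
      (hω₁.mul (ih j)).add (hω₂.mul (ih (j + 1)))
    refine h.congr_deriv ?_
    rcases k with _ | k
    · simp only [CharP.cast_eq_zero, Nat.cast_one, zero_add, add_zero, add_assoc, Int.reduceAdd,
        mul_zero, sub_self, div_zero, one_mul]
      ring
    · have := bspline_div_sub_bspline_div ht k j x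
      push_cast at this ⊢
      ring_nf at this ⊢
      linear_combination -(k + 1 : ℝ) * this

theorem hasDerivWithinAt_sum_bspline (ht : StrictMono t) (k : ℕ) {j s : ℤ} {u : ℝ}
    (hu : u < max (t j) (t s)) :
    HasDerivWithinAt (fun y ↦ ∑ i ∈ Icc j (s - 1), bspline t (k + 1) i y)
      (k / (t (j + k) - t j) * bspline t k j u) (Set.Ici u) u := by
  refine (HasDerivWithinAt.fun_sum fun i _ ↦ hasDerivWithinAt_bspline ht k i u).congr_deriv ?_
  rcases le_or_gt j s with hjs | hsj
  · have hus : u < t s := by rwa [max_eq_right (ht.monotone hjs)] at hu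
    rw [← mul_sum, sum_Icc_sub_one_sub' (fun i ↦ bspline t k i u / (t (i + k) - t i)) hjs,
      bspline_eq_zero_of_lt ht.monotone hus]
    ring
  · have huj : u < t j := by rwa [max_eq_left (ht hsj).le] at hu
    rw [Icc_eq_empty (by omega), sum_empty, bspline_eq_zero_of_lt ht.monotone huj, mul_zero]

theorem integral_bspline (ht : StrictMono t) {k : ℕ} (hk : 0 < k) {j s : ℤ} {a x : ℝ}
    (ha : a ≤ t j) (hx : x ≤ t s) :
    ∫ u in a..x, bspline t k j u =
      (t (j + k) - t j) / k * ∑ i ∈ Icc j (s - 1), bspline t (k + 1) i x := by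
  obtain ⟨k, rfl⟩ := Nat.exists_eq_add_one_of_ne_zero hk.ne'
  have hD : t (j + (k + 1 : ℕ)) - t j ≠ 0 := (sub_pos.2 (ht (by omega))).ne'
  have hk₀ : ((k + 1 : ℕ) : ℝ) ≠ 0 := by positivity
  have hF := intervalIntegral.integral_eq_sub_of_hasDeriv_right
    (f := fun y ↦ ∑ i ∈ Icc j (s - 1), bspline t (k + 2) i y)
    (continuous_finsetSum _ fun i _ ↦ continuous_bspline ht k i).continuousOn
    (fun u hu ↦ (hasDerivWithinAt_sum_bspline ht (k + 1) (hu.2.trans_le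
      (max_le_max ha hx))).mono Set.Ioi_subset_Ici_self)
    ((intervalIntegrable_bspline ht (k + 1) j a x).const_mul _)
  have hFa : ∑ i ∈ Icc j (s - 1), bspline t (k + 2) i a = 0 :=
    sum_eq_zero fun i hi ↦ bspline_eq_zero_of_le ht (ha.trans (ht.monotone (mem_Icc.1 hi).1)) k
  rw [intervalIntegral.integral_const_mul, hFa, sub_zero] at hF
  rw [← hF]
  field_simp

theorem splineFunction_integral_general (t : ℤ → ℝ) (ht : StrictMono t) (k : ℕ) (hk : 1 ≤ k)
    (r n : ℤ) (α : ℤ → ℝ) (hα : ∀ j : ℤ, (j < r ∨ n < j) → α j = 0)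
    (x : ℝ) (s : ℤ) (hs₂ : x ≤ t s) :
    ∫ u in (t r)..x, (∑ i ∈ Finset.Icc r n, α i * bspline t k i u) =
      ∑ i ∈ Finset.Icc r (s - 1),
        (∑ j ∈ Finset.Icc r i, α j * (t (j + (k : ℤ)) - t j) / (k : ℝ)) *
          bspline t (k + 1) i x := by
  calc ∫ u in t r..x, ∑ j ∈ Icc r n, α j * bspline t k j u
      = ∑ j ∈ Icc r n, ∑ i ∈ Icc j (s - 1),
          α j * (t (j + k) - t j) / k * bspline t (k + 1) i x := by
        rw [intervalIntegral.integral_finsetSum fun j _ ↦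
          (intervalIntegrable_bspline ht k j _ _).const_mul _]
        refine sum_congr rfl fun j hj ↦ ?_
        rw [intervalIntegral.integral_const_mul,
          integral_bspline ht hk (ht.monotone (mem_Icc.1 hj).1) hs₂, mul_sum, mul_sum]
        exact sum_congr rfl fun i _ ↦ by ring
    _ = ∑ i ∈ Icc r (s - 1), ∑ j ∈ Icc r (min i n),
          α j * (t (j + k) - t j) / k * bspline t (k + 1) i x :=
        sum_Icc_sum_Icc_comm _ r n (s - 1)
    _ = _ := by
        refine sum_congr rfl fun i _ ↦ ?_
        rw [sum_mul]
        refine sum_subset (Icc_subset_Icc_right (min_le_left i n)) fun j hj hjn ↦ ?_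
        simp only [mem_Icc, le_min_iff, not_and] at hj hjn
        rw [hα j (.inr (by omega))]
        ring

/-- Integral of a spline function: if `α j = 0` for `j < r` or `j > n` and
`f(u) = Σ_{i=r}^{n} α i B_{i,k}(u)` with `k ≥ 1`, then for every `x ≥ t r` and `s` with
`t_{s−1} < x ≤ t_s`,
`∫_{t_r}^{x} f(u) du = Σ_{i=r}^{s−1} (Σ_{j=r}^{i} α j (t_{j+k} − t_j)/k) B_{i,k+1}(x)`. -/
theorem splineFunction_integral (t : ℤ → ℝ) (ht : StrictMono t) (k : ℕ) (hk : 1 ≤ k)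
    (r n : ℤ) (hrn : r ≤ n) (α : ℤ → ℝ) (hα : ∀ j : ℤ, (j < r ∨ n < j) → α j = 0)
    (x : ℝ) (hx : t r ≤ x) (s : ℤ) (hs₁ : t (s - 1) < x) (hs₂ : x ≤ t s) :
    ∫ u in (t r)..x, (∑ i ∈ Finset.Icc r n, α i * bspline t k i u) =
      ∑ i ∈ Finset.Icc r (s - 1),
        (∑ j ∈ Finset.Icc r i, α j * (t (j + (k : ℤ)) - t j) / (k : ℝ)) *
          bspline t (k + 1) i x :=
  splineFunction_integral_general t ht k hk r n α hα x s hs₂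
end
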